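/- Let h ≥ 1, let X ⊆ B^h, let G = Q_h(X), and let u ∈ V(G). Then the subgraph of G induced by I_G(0^h, u) = {w ∈ B^h : w ≤ u} is isomorphic to the hypercube Q_{w(u)} of dimension w(u). -/

import Mathlib

open SimpleGraph

/-- The hypercube `Q_h` on binary words of length `h`: two words are adjacent
iff their Hamming distance is `1`. -/
def Qcube (h : ℕ) : SimpleGraph (Fin h → Bool) where
  Adj u v := hammingDist u v = 1
  symm := ⟨fun u v huv => by
    have huv' : hammingDist u v = 1 := huv
    show hammingDist v u = 1; rwa [hammingDist_comm]⟩
  loopless := ⟨fun u hu => by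
    have hu' : hammingDist u u = 1 := hu
    rw [hammingDist_self] at hu'; exact absurd hu' (by norm_num)⟩

/-- Vertex set of the daisy cube `Q_h(X)`: all words below some element of `X`. -/
def daisyVerts {h : ℕ} (X : Set (Fin h → Bool)) : Set (Fin h → Bool) :=
  {v | ∃ x ∈ X, v ≤ x}

/-- The daisy cube `Q_h(X)`, the subgraph of `Q_h` induced by `daisyVerts X`. -/
def daisyGraph {h : ℕ} (X : Set (Fin h → Bool)) : SimpleGraph (daisyVerts X) :=
  SimpleGraph.induce (daisyVerts X) (Qcube h)

/-- `\widehat X`: the set of maximal elements of the poset `(X, ≤)`. -/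
def maxSet {h : ℕ} (X : Set (Fin h → Bool)) : Set (Fin h → Bool) :=
  {x ∈ X | ∀ y ∈ X, x ≤ y → x = y}

/-- The all-zeros word `0^h`. -/
def zeroW (h : ℕ) : Fin h → Bool := fun _ => false

/-- Bitwise XOR of words. -/
def xorW {h : ℕ} (u v : Fin h → Bool) : Fin h → Bool := fun i => xor (u i) (v i)

/-- Bitwise AND of words. -/
def andW {h : ℕ} (u v : Fin h → Bool) : Fin h → Bool := fun i => u i && v i

/-- The weight `w(u)`: the number of ones of a word. -/
def weightW {h : ℕ} (u : Fin h → Bool) : ℕ :=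
  (Finset.univ.filter fun i => u i = true).card

/-- The interval `I_G(u,v)`: vertices lying on shortest `u,v`-paths. -/
def gInterval {V : Type*} (G : SimpleGraph V) (u v : V) : Set V :=
  {w | G.dist u w + G.dist w v = G.dist u v}

/-- `N^u(v)`: neighbors of `v` that are closer to `u` than `v` is. -/
def lowerNbrs {V : Type*} (G : SimpleGraph V) (u v : V) : Set V :=
  {z | G.Adj v z ∧ G.dist u z + 1 = G.dist u v}

/-- `α` is an isometric embedding of `G` into `Q_h`. -/
def IsIsomEmb {V : Type*} (G : SimpleGraph V) {h : ℕ} (α : V → Fin h → Bool) : Prop :=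
  ∀ a b, hammingDist (α a) (α b) = G.dist a b

/-- `α` is a proper embedding of `G` into `Q_h`: an isometric embedding such that
`G` is isomorphic to the daisy cube generated by the image of `α`. -/
def IsProperEmb {V : Type*} (G : SimpleGraph V) {h : ℕ} (α : V → Fin h → Bool) : Prop :=
  IsIsomEmb G α ∧ Nonempty (G ≃g daisyGraph (Set.range α))

/-- `v` is a minimal vertex of `G`: some proper embedding sends `v` to `0^h`. -/
def IsMinVertex {V : Type*} (G : SimpleGraph V) (h : ℕ) (v : V) : Prop :=
  ∃ α : V → Fin h → Bool, IsProperEmb G α ∧ α v = zeroW h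

/-- The labeling conditions of Proposition `cubes`/Lemma `partial`: `α v = 0^h`,
the neighbors of `v` get pairwise distinct weight-one labels, and every other
vertex gets the bitwise OR of the labels of its down-neighbors. -/
def goodLabeling {V : Type*} (G : SimpleGraph V) {h : ℕ} (v : V)
    (α : V → Fin h → Bool) : Prop :=
  α v = zeroW h ∧
  Set.InjOn α (G.neighborSet v) ∧
  (∀ z ∈ G.neighborSet v, weightW (α z) = 1) ∧
  (∀ u ∉ insert v (G.neighborSet v),
    ∀ i, α u i = true ↔ ∃ z ∈ lowerNbrs G v u, α z i = true)


/-- For every vertex `u` of the daisy cube `G = Q_h(X)`, the subgraph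
induced by `I_G(0^h, u) = {w : w ≤ u}` is isomorphic to the hypercube of dimension
`w(u)`. -/
theorem stmt_19 (h : ℕ) (hh : 1 ≤ h) (X : Set (Fin h → Bool))
    (u : daisyVerts X) :
    Nonempty
      (SimpleGraph.induce {w : Fin h → Bool | w ≤ (u : Fin h → Bool)} (Qcube h)
        ≃g Qcube (weightW (u : Fin h → Bool))) := by
  
  classical
  set s : Finset (Fin h) := Finset.univ.filter fun i => (u : Fin h → Bool) i = true with hs
  set e : s ≃ Fin s.card := s.equivFin with he
  have hmem : ∀ i : Fin h, i ∈ s ↔ (u : Fin h → Bool) i = true := by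
    intro i; simp [hs]
  refine ⟨⟨⟨fun w j => (w : Fin h → Bool) (e.symm j),
    fun v => ⟨fun i => if hi : i ∈ s then v (e ⟨i, hi⟩) else false, ?_⟩, ?_, ?_⟩, ?_⟩⟩
  · intro i
    by_cases hi : i ∈ s
    · have : (u : Fin h → Bool) i = true := (hmem i).1 hi
      simp [this]
    · simp [hi]
  · rintro ⟨w, hw⟩
    ext i
    by_cases hi : i ∈ s
    · simp [hi]
    · have hui : (u : Fin h → Bool) i = false := by
        by_contra hc
        exact hi ((hmem i).2 (by simpa using hc))
      have : w i ≤ false := by have := hw i; rwa [hui] at this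
      simp [hi, le_bot_iff.mp this]
  · intro v
    ext j
    simp
    exact congrArg v (e.apply_symm_apply j)
  · rintro ⟨w₁, hw₁⟩ ⟨w₂, hw₂⟩
    have key : hammingDist (fun j => w₁ (e.symm j)) (fun j => w₂ (e.symm j))
        = hammingDist w₁ w₂ := by
      unfold hammingDist
      refine Finset.card_bij (fun j _ => (e.symm j : Fin h)) ?_ ?_ ?_
      · intro j hj
        simp only [Finset.mem_filter, Finset.mem_univ, true_and] at hj ⊢
        exact hj
      · intro a ha b hb hab
        have : e.symm a = e.symm b := Subtype.ext hab
        exact e.symm.injective this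
      · intro i hi
        simp only [Finset.mem_filter, Finset.mem_univ, true_and] at hi
        have his : i ∈ s := by
          rw [hmem]
          by_contra hc
          have hui : (u : Fin h → Bool) i = false := by simpa using hc
          have h1 : w₁ i = false := le_bot_iff.mp (by have := hw₁ i; rwa [hui] at this)
          have h2 : w₂ i = false := le_bot_iff.mp (by have := hw₂ i; rwa [hui] at this)
          exact hi (h1.trans h2.symm)
        exact ⟨e ⟨i, his⟩, by simpa using hi, by simp⟩
    simp only [Qcube, comap_adj, Function.Embedding.coe_subtype, Equiv.coe_fn_mk]
    exact ⟨fun hadj => key.symm.trans hadj, fun hadj => key.trans hadj⟩
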